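/- arXiv:2004.07243 — 2 statements merged into one kernel-verified Lean document; each statement's English description precedes it below -/
import Mathlib

section
/- Let {s_1,…,s_N} be an independent set of N Hermitian, pairwise commuting Pauli strings on N qubits, G the group they generate, and ψ a unit vector with s_i ψ = ψ for all i. For a subset A of the qubits let G_A = {g ∈ G : g acts as the identity on every site outside A}, and for g ∈ G_A let g|_A denote the matrix induced by g on the qubits in A. Then the reduced density matrix of |ψ⟩⟨ψ| on A equals ρ_A = 2^{−|A|} Σ_{g ∈ G_A} g|_A. -/
open scoped Classical
open scoped Matrix
noncomputable section
namespace QStab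

/-- The space of operators (matrices) on a chain of qubits indexed by `ι`. -/
abbrev Op (ι : Type*) [Fintype ι] [DecidableEq ι] : Type _ :=
  Matrix (ι → Fin 2) (ι → Fin 2) ℂ

variable {ι : Type*} [Fintype ι] [DecidableEq ι]

/-- The Pauli `X` operator at site `i`. -/
def PX (i : ι) : Op ι :=
  Matrix.of fun f g => if f = Function.update g i (g i + 1) then 1 else 0

/-- The Pauli `Z` operator at site `i`. -/
def PZ (i : ι) : Op ι :=
  Matrix.of fun f g => if f = g then ((-1 : ℂ)) ^ ((f i : ℕ)) else 0

/-- The (ordered) product `∏ i, (X i)^(a i)`. -/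
def XProd (a : ι → Fin 2) : Op ι :=
  (Finset.univ.toList.map fun i => PX i ^ ((a i : ℕ))).prod

/-- The (ordered) product `∏ i, (Z i)^(b i)`. -/
def ZProd (b : ι → Fin 2) : Op ι :=
  (Finset.univ.toList.map fun i => PZ i ^ ((b i : ℕ))).prod

/-- `c` is one of the allowed phases `1, −1, i, −i` of a Pauli string. -/
def IsPhase (c : ℂ) : Prop := c = 1 ∨ c = -1 ∨ c = Complex.I ∨ c = -Complex.I

/-- `M` is a Pauli string: `M = c • (∏ i, (X i)^(a i)) * (∏ i, (Z i)^(b i))`. -/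
def IsPauli (M : Op ι) : Prop :=
  ∃ (c : ℂ) (a b : ι → Fin 2), IsPhase c ∧ M = c • (XProd a * ZProd b)

/-- `M` is a Pauli string acting as the identity on every site outside `A`. -/
def IsPauliSupportedOn (A : Finset ι) (M : Op ι) : Prop :=
  ∃ (c : ℂ) (a b : ι → Fin 2), IsPhase c ∧ (∀ i, i ∉ A → a i = 0 ∧ b i = 0) ∧
    M = c • (XProd a * ZProd b)

/-- `M` is a Pauli string acting trivially (as the identity) at the site `i`. -/
def ActsTriviallyAt (i : ι) (M : Op ι) : Prop :=
  ∃ (c : ℂ) (a b : ι → Fin 2), IsPhase c ∧ a i = 0 ∧ b i = 0 ∧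
    M = c • (XProd a * ZProd b)

/-- The function on all of `ι` agreeing with `f` on `A` and with `h` on `Aᶜ`. -/
def combine (A : Finset ι) (f : ↥A → Fin 2) (h : ↥(Aᶜ) → Fin 2) : ι → Fin 2 :=
  fun i => if hi : i ∈ A then f ⟨i, hi⟩ else h ⟨i, Finset.mem_compl.mpr hi⟩

/-- The partial trace over the qubits outside `A` (the reduced density matrix on `A`). -/
def ptrace (A : Finset ι) (ρ : Op ι) : Matrix (↥A → Fin 2) (↥A → Fin 2) ℂ :=
  Matrix.of fun f g => ∑ h : ↥(Aᶜ) → Fin 2, ρ (combine A f h) (combine A g h)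

/-- The rank-one projector `|ψ⟩⟨ψ|`. -/
def outer (ψ : (ι → Fin 2) → ℂ) : Op ι :=
  Matrix.of fun f g => ψ f * star (ψ g)

/-- `ψ` is a unit vector. -/
def IsUnitVec (ψ : (ι → Fin 2) → ℂ) : Prop :=
  ∑ f, Complex.normSq (ψ f) = 1

/-- The von Neumann entropy `−Tr(ρ log ρ)` of a Hermitian matrix, computed through its
eigenvalues (with the convention `0 log 0 = 0`, and junk value `0` on non-Hermitian input). -/
def vnEntropy {n : Type*} [Fintype n] [DecidableEq n] (ρ : Matrix n n ℂ) : ℝ :=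
  if h : ρ.IsHermitian then -∑ i, (h.eigenvalues i * Real.log (h.eigenvalues i)) else 0

/-- The von Neumann entanglement entropy of `ψ` in the region `A`:
`S_A(ψ) = −Tr(ρ_A log ρ_A)` where `ρ_A` is the reduced density matrix of `|ψ⟩⟨ψ|`. -/
def entEntropy (A : Finset ι) (ψ : (ι → Fin 2) → ℂ) : ℝ :=
  vnEntropy (ptrace A (outer ψ))

/-- The product of the `s i` over the subset `T` (in increasing order of indices). -/
def subProd {N : ℕ} (s : Fin N → Op ι) (T : Finset (Fin N)) : Op ι :=
  ((Finset.sort T (· ≤ ·)).map s).prod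

/-- `{s 0, …, s (N-1)}` is an independent set of `N` Hermitian pairwise commuting Pauli
strings: products over distinct subsets are pairwise distinct and no nonempty product
equals `±I`. -/
def IndepStabs {N : ℕ} (s : Fin N → Op ι) : Prop :=
  (∀ i, IsPauli (s i)) ∧ (∀ i, (s i).IsHermitian) ∧
  (∀ i j, Commute (s i) (s j)) ∧
  Function.Injective (subProd s) ∧
  (∀ T : Finset (Fin N), T.Nonempty → subProd s T ≠ 1 ∧ subProd s T ≠ -1)

/-- The 1-based label of the site `i : Fin N`, so that the qubits are labeled `1, …, N`. -/
def lbl {N : ℕ} (i : Fin N) : ℕ := (i : ℕ) + 1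

/-- The single-qubit operator `Z p` at the site with label `p` (1-based). -/
def ZSingle (N : ℕ) (p : ℕ) : Op (Fin N) :=
  ZProd fun i => if lbl i = p then 1 else 0

/-- The string of `Z`'s at the labels `p, p+2, …, q` (sites of the parity of `p` in `[p,q]`). -/
def ZStr (N : ℕ) (p q : ℕ) : Op (Fin N) :=
  ZProd fun i => if p ≤ lbl i ∧ lbl i ≤ q ∧ lbl i % 2 = p % 2 then 1 else 0

/-- The string operator `g_{p,q} = X p * (∏_{k=0}^{(q−p)/2−1} Z (p+2k+1)) * X q`
for labels `p < q` of the same parity.  In particular the cluster stabilizer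
`g i = X (i−1) * Z i * X (i+1)` is `GStr N (i-1) (i+1)`. -/
def GStr (N : ℕ) (p q : ℕ) : Op (Fin N) :=
  (XProd fun i => if lbl i = p ∨ lbl i = q then 1 else 0) *
    ZProd fun i => if p < lbl i ∧ lbl i < q ∧ ¬(lbl i % 2 = p % 2) then 1 else 0

/-- `G1 = ∏_{i even} Z i` (even labels). -/
def Gsym1 (N : ℕ) : Op (Fin N) := ZProd fun i => if lbl i % 2 = 0 then 1 else 0

/-- `G2 = ∏_{i odd} Z i` (odd labels). -/
def Gsym2 (N : ℕ) : Op (Fin N) := ZProd fun i => if lbl i % 2 = 1 then 1 else 0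

/-- The measurement channel `𝓔_S(ρ) = Π₊ ρ Π₊ + Π₋ ρ Π₋` with `Π± = (I ± S)/2`. -/
def measChannel (S ρ : Op ι) : Op ι :=
  ((2 : ℂ)⁻¹ • (1 + S)) * ρ * ((2 : ℂ)⁻¹ • (1 + S)) +
    ((2 : ℂ)⁻¹ • (1 - S)) * ρ * ((2 : ℂ)⁻¹ • (1 - S))

/-- Measurement-update map on stabilizer groups: if the measured Pauli `M` commutes with
every element of `G` the group is unchanged; otherwise the new group is generated by the
centralizer `C_G(M)` together with `ε • M` (where `ε` is the measurement outcome sign). -/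
def Meas (G : Submonoid (Op ι)) (M : Op ι) (ε : ℂ) : Submonoid (Op ι) :=
  if ∀ g ∈ G, M * g = g * M then G
  else Submonoid.closure ({g | g ∈ G ∧ M * g = g * M} ∪ {ε • M})

/-- The isolated-SPT stabilizer set `𝒮(A)`: the string operators `g_{q_i, q_{i+1}}` between
consecutive elements of `A`, together with the total `Z`-product `∏_{p ∈ A} Z p`. -/
def SPTstabs (N : ℕ) (A : Finset ℕ) : Set (Op (Fin N)) :=
  {m | (∃ p ∈ A, ∃ q ∈ A, p < q ∧ (∀ r ∈ A, ¬(p < r ∧ r < q)) ∧ m = GStr N p q) ∨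
    m = ZProd fun i => if lbl i ∈ A then 1 else 0}

/-- The block of the partition `P` containing `x`. -/
def blockOf (P : Finset (Finset ℕ)) (x : ℕ) : Finset ℕ :=
  P.sup fun A => if x ∈ A then A else ∅

/-- Partition update for the move “measure `Z i`”: `i` is split off into its own block. -/
def updZ (P : Finset (Finset ℕ)) (i : ℕ) : Finset (Finset ℕ) :=
  insert {i} ((P.image fun A => A.erase i).erase ∅)

/-- Partition update for the move “measure `g i`”: the blocks of `i−1` and `i+1` merge. -/
def updG (P : Finset (Finset ℕ)) (i : ℕ) : Finset (Finset ℕ) :=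
  insert (blockOf P (i - 1) ∪ blockOf P (i + 1))
    ((P.erase (blockOf P (i - 1))).erase (blockOf P (i + 1)))

/-- The partition of `{1, …, N}` into singletons. -/
def startPart (N : ℕ) : Finset (Finset ℕ) := (Finset.Icc 1 N).image fun i => {i}

/-- The matrix `M`, supported on `A`, viewed as an operator on the qubits in `A` only. -/
def restrictOp (A : Finset ι) (M : Op ι) : Matrix (↥A → Fin 2) (↥A → Fin 2) ℂ :=
  Matrix.of fun f g =>
    M (fun i => if hi : i ∈ A then f ⟨i, hi⟩ else 0)
      (fun i => if hi : i ∈ A then g ⟨i, hi⟩ else 0)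

end QStab

/-!
The group `G` generated by the `s i` is abelian, its elements are the `2^N` distinct products
`∏_{i ∈ T} s i`, and each is a Hermitian Pauli string squaring to `1`. Hence the average
`Π = 2^{-N} ∑_{g ∈ G} g` is an orthogonal projection fixing `ψ`; its trace is `1` because every
`g ≠ 1` is a Pauli string other than `±1`, hence traceless. So `Π = |ψ⟩⟨ψ|`, and the formula
follows by taking partial traces term by term: a Pauli string with an `X` factor outside `A` has
no nonzero entry between basis states that agree outside `A`, one with only a `Z` factor
outside `A` has entries that cancel in pairs when summed over the traced qubits, and one supported on `A` has partial trace `2^{|Aᶜ|} g|_A`.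
-/

open scoped ComplexOrder

lemma Fintype.sum_eq_zero_of_map_add_eq_neg {G K : Type*} [AddGroup G] [Fintype G] [Field K]
    [CharZero K] (F : G → K) (d : G) (hF : ∀ x, F (x + d) = -F x) : ∑ x, F x = 0 := by
  have h : ∑ x, F x = -∑ x, F x := by
    rw [← Finset.sum_neg_distrib, ← Equiv.sum_comp (Equiv.addRight d)]
    exact Finset.sum_congr rfl fun x _ => hF x
  linear_combination h / 2

lemma Matrix.IsHermitian.eq_of_mul_eq_of_trace_eq {𝕜 n : Type*} [RCLike 𝕜] [Fintype n]
    {P Q : Matrix n n 𝕜} (hP : P.IsHermitian) (hQ : Q.IsHermitian) (hPP : P * P = P)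
    (hQQ : Q * Q = Q) (hPQ : P * Q = Q) (htr : P.trace = Q.trace) : P = Q := by
  have hQP : Q * P = Q := by
    simpa only [Matrix.conjTranspose_mul, hP.eq, hQ.eq] using congrArg Matrix.conjTranspose hPQ
  have hR : (P - Q)ᴴ * (P - Q) = P - Q := by
    rw [(hP.sub hQ).eq, sub_mul, mul_sub, mul_sub, hPP, hPQ, hQP, hQQ]
    abel
  rw [← sub_eq_zero, ← Matrix.trace_conjTranspose_mul_self_eq_zero_iff, hR, Matrix.trace_sub,
    htr, sub_self]

lemma Finset.singleton_symmDiff_of_notMem {α : Type*} [DecidableEq α] {s : Finset α}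
    {a : α} (h : a ∉ s) : symmDiff {a} s = insert a s := by
  ext x
  by_cases hx : x = a
  · subst hx; simp [Finset.mem_symmDiff, h]
  · simp [Finset.mem_symmDiff, hx]

lemma Finset.singleton_symmDiff_of_mem {α : Type*} [DecidableEq α] {s : Finset α}
    {a : α} (h : a ∈ s) : symmDiff {a} s = s.erase a := by
  ext x
  by_cases hx : x = a
  · subst hx; simp [Finset.mem_symmDiff, h]
  · simp [Finset.mem_symmDiff, hx]

namespace QStab

lemma fin_two_add_self (x : Fin 2) : x + x = 0 := by
  revert x; decide

variable {ι : Type*}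

lemma add_self_eq_zero_of_fin_two (a : ι → Fin 2) : a + a = 0 :=
  funext fun i => fin_two_add_self (a i)

variable [Fintype ι]

def zSign (b f : ι → Fin 2) : ℂ :=
  ∏ i, (-1 : ℂ) ^ ((b i : ℕ) * (f i : ℕ))

lemma neg_one_pow_mul_fin_two_add (x y z : Fin 2) :
    (-1 : ℂ) ^ ((x : ℕ) * ((y + z : Fin 2) : ℕ))
      = (-1) ^ ((x : ℕ) * (y : ℕ)) * (-1) ^ ((x : ℕ) * (z : ℕ)) := by
  fin_cases x <;> fin_cases y <;> fin_cases z <;> norm_num [Fin.val_add]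

lemma zSign_comm (b f : ι → Fin 2) : zSign b f = zSign f b := by
  simp only [zSign, Nat.mul_comm]

lemma zSign_add_right (b f g : ι → Fin 2) : zSign b (f + g) = zSign b f * zSign b g := by
  simp only [zSign, ← Finset.prod_mul_distrib, Pi.add_apply, neg_one_pow_mul_fin_two_add]

lemma zSign_add_left (b c f : ι → Fin 2) : zSign (b + c) f = zSign b f * zSign c f := by
  rw [zSign_comm, zSign_add_right, zSign_comm f, zSign_comm f]

lemma zSign_eq_one_of_disjoint {b f : ι → Fin 2} (h : ∀ i, b i = 0 ∨ f i = 0) :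
    zSign b f = 1 :=
  Finset.prod_eq_one fun i _ => by rcases h i with h | h <;> simp [h]

@[simp] lemma zSign_zero_left (f : ι → Fin 2) : zSign 0 f = 1 :=
  zSign_eq_one_of_disjoint fun _ => Or.inl rfl

@[simp] lemma zSign_zero_right (b : ι → Fin 2) : zSign b 0 = 1 :=
  zSign_eq_one_of_disjoint fun _ => Or.inr rfl

lemma isPhase_mul {c c' : ℂ} (h : IsPhase c) (h' : IsPhase c') : IsPhase (c * c') := by
  rcases h with rfl | rfl | rfl | rfl <;> rcases h' with rfl | rfl | rfl | rfl <;>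
    simp [IsPhase]

lemma isPhase_zSign (b f : ι → Fin 2) : IsPhase (zSign b f) := by
  refine Finset.prod_induction _ IsPhase (fun _ _ => isPhase_mul) (Or.inl rfl) fun i _ => ?_
  rcases Nat.even_or_odd ((b i : ℕ) * (f i : ℕ)) with h | h
  · exact Or.inl h.neg_one_pow
  · exact Or.inr (Or.inl h.neg_one_pow)

lemma IsPhase.eq_one_of_nonneg {c : ℂ} (hc : IsPhase c) (h : 0 ≤ c) : c = 1 := by
  rcases hc with rfl | rfl | rfl | rfl
  · rfl
  all_goals norm_num [Complex.le_def] at h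

variable [DecidableEq ι]

lemma zSign_single (b : ι → Fin 2) (j : ι) : zSign b (Pi.single j 1) = (-1) ^ (b j : ℕ) := by
  rw [zSign, Finset.prod_eq_single j (fun i _ hi => by simp [Pi.single_eq_of_ne hi])
    (by simp)]
  simp

lemma zSign_single_of_ne_zero {b : ι → Fin 2} {j : ι} (hj : b j ≠ 0) :
    zSign b (Pi.single j 1) = -1 := by
  rw [zSign_single, Fin.eq_one_of_ne_zero _ hj]
  simp

/-- The Pauli string `c • (XProd a * ZProd b)` in closed form (`smul_XProd_mul_ZProd`). -/
def pauli (c : ℂ) (a b : ι → Fin 2) : Op ι :=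
  Matrix.of fun f g => if f = g + a then c * zSign b g else 0

@[simp] lemma pauli_apply (c : ℂ) (a b f g : ι → Fin 2) :
    pauli c a b f g = if f = g + a then c * zSign b g else 0 := rfl

lemma pauli_zero_zero (c : ℂ) : pauli c (0 : ι → Fin 2) 0 = c • 1 := by
  ext f g
  by_cases h : f = g <;> simp [h]

lemma smul_pauli (c' c : ℂ) (a b : ι → Fin 2) : c' • pauli c a b = pauli (c' * c) a b := by
  ext f g
  by_cases h : f = g + a <;> simp [h, mul_assoc]

lemma pauli_mul_pauli (c c' : ℂ) (a b a' b' : ι → Fin 2) :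
    pauli c a b * pauli c' a' b' = pauli (c * c' * zSign b a') (a + a') (b + b') := by
  ext f g
  rw [Matrix.mul_apply, Finset.sum_eq_single (g + a') (fun k _ hk => by simp [hk]) (by simp)]
  simp only [pauli_apply, show g + a' + a = g + (a + a') by abel]
  split_ifs
  · rw [zSign_add_right, zSign_add_left]
    ring
  · simp

lemma pauli_apply_add_add (c : ℂ) (a b f g k : ι → Fin 2) :
    pauli c a b (f + k) (g + k) = zSign b k * pauli c a b f g := by
  simp only [pauli_apply, add_right_comm g k a, add_left_inj, zSign_add_right]
  split_ifs <;> ring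

lemma pauli_apply_eq_zero_of_apply_eq {a f g : ι → Fin 2} {i : ι} (hfg : f i = g i)
    (ha : a i ≠ 0) (c : ℂ) (b : ι → Fin 2) : pauli c a b f g = 0 := by
  rw [pauli_apply, if_neg]
  intro h
  rw [h, Pi.add_apply, add_eq_left] at hfg
  exact ha hfg

lemma PX_eq_pauli (i : ι) : PX i = pauli 1 (Pi.single i 1) 0 := by
  ext f g
  have h : Function.update g i (g i + 1) = g + Pi.single i 1 := by
    ext j
    by_cases hj : j = i
    · subst hj; simp
    · simp [hj]
  simp [PX, h]

lemma PZ_eq_pauli (i : ι) : PZ i = pauli 1 0 (Pi.single i 1) := by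
  ext f g
  by_cases h : f = g <;> simp [PZ, h, zSign_comm _ g, zSign_single]

lemma prod_map_pauli_x (l : List ι) (a : ι → ι → Fin 2) :
    (l.map fun i => pauli 1 (a i) 0).prod = pauli 1 (l.map a).sum 0 := by
  induction l with
  | nil => simp [pauli_zero_zero]
  | cons i l ih => simp [ih, pauli_mul_pauli]

lemma prod_map_pauli_z (l : List ι) (b : ι → ι → Fin 2) :
    (l.map fun i => pauli 1 0 (b i)).prod = pauli 1 0 (l.map b).sum := by
  induction l with
  | nil => simp [pauli_zero_zero]
  | cons i l ih => simp [ih, pauli_mul_pauli]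

lemma pow_fin_two_eq_ite (M : Op ι) (v : Fin 2) : M ^ (v : ℕ) = if v = 0 then 1 else M := by
  rcases Fin.exists_fin_two.mp ⟨v, rfl⟩ with rfl | rfl <;> simp

lemma XProd_eq_pauli (a : ι → Fin 2) : XProd a = pauli 1 a 0 := by
  have hpow : ∀ i, PX i ^ (a i : ℕ) = pauli 1 (Pi.single i (a i)) 0 := by
    intro i
    rw [pow_fin_two_eq_ite]
    split_ifs with h
    · simp [h, pauli_zero_zero]
    · rw [Fin.eq_one_of_ne_zero _ h, PX_eq_pauli]
  rw [XProd, List.map_congr_left fun i _ => hpow i, prod_map_pauli_x, Finset.sum_map_toList,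
    Finset.univ_sum_single]

lemma ZProd_eq_pauli (b : ι → Fin 2) : ZProd b = pauli 1 0 b := by
  have hpow : ∀ i, PZ i ^ (b i : ℕ) = pauli 1 0 (Pi.single i (b i)) := by
    intro i
    rw [pow_fin_two_eq_ite]
    split_ifs with h
    · simp [h, pauli_zero_zero]
    · rw [Fin.eq_one_of_ne_zero _ h, PZ_eq_pauli]
  rw [ZProd, List.map_congr_left fun i _ => hpow i, prod_map_pauli_z, Finset.sum_map_toList,
    Finset.univ_sum_single]

lemma smul_XProd_mul_ZProd (c : ℂ) (a b : ι → Fin 2) : c • (XProd a * ZProd b) = pauli c a b := by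
  rw [XProd_eq_pauli, ZProd_eq_pauli, pauli_mul_pauli, smul_pauli]
  simp

lemma isPauli_iff {M : Op ι} : IsPauli M ↔ ∃ c a b, IsPhase c ∧ M = pauli c a b := by
  simp only [IsPauli, smul_XProd_mul_ZProd]

lemma isPauliSupportedOn_iff {A : Finset ι} {M : Op ι} :
    IsPauliSupportedOn A M ↔
      ∃ c a b, IsPhase c ∧ (∀ i, i ∉ A → a i = 0 ∧ b i = 0) ∧ M = pauli c a b := by
  simp only [IsPauliSupportedOn, smul_XProd_mul_ZProd]

lemma isPauli_one : IsPauli (1 : Op ι) :=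
  isPauli_iff.mpr ⟨1, 0, 0, Or.inl rfl, by rw [pauli_zero_zero, one_smul]⟩

lemma IsPauli.mul {M M' : Op ι} (hM : IsPauli M) (hM' : IsPauli M') : IsPauli (M * M') := by
  obtain ⟨c, a, b, hc, rfl⟩ := isPauli_iff.mp hM
  obtain ⟨c', a', b', hc', rfl⟩ := isPauli_iff.mp hM'
  exact isPauli_iff.mpr ⟨_, _, _, isPhase_mul (isPhase_mul hc hc') (isPhase_zSign b a'),
    pauli_mul_pauli c c' a b a' b'⟩

/-- `M * M` is a phase times `1`, and for Hermitian `M` that phase is a diagonal entry of the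
positive semidefinite `Mᴴ * M`. -/
lemma IsPauli.mul_self_eq_one {M : Op ι} (hM : IsPauli M) (hH : M.IsHermitian) : M * M = 1 := by
  obtain ⟨c, a, b, hc, rfl⟩ := isPauli_iff.mp hM
  have hsq : pauli c a b * pauli c a b = (c * c * zSign b a) • 1 := by
    rw [pauli_mul_pauli, add_self_eq_zero_of_fin_two, add_self_eq_zero_of_fin_two,
      pauli_zero_zero]
  have hpsd := Matrix.posSemidef_conjTranspose_mul_self (pauli c a b)
  rw [hH.eq, hsq] at hpsd
  have hphase : c * c * zSign b a = 1 :=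
    (isPhase_mul (isPhase_mul hc hc) (isPhase_zSign b a)).eq_one_of_nonneg
      (by simpa using hpsd.diag_nonneg (i := 0))
  rw [hsq, hphase, one_smul]

lemma sum_zSign_eq_zero {b : ι → Fin 2} (hb : b ≠ 0) : ∑ f, zSign b f = 0 := by
  obtain ⟨j, hj⟩ := Function.ne_iff.mp hb
  exact Fintype.sum_eq_zero_of_map_add_eq_neg _ (Pi.single j 1) fun f => by
    rw [zSign_add_right, zSign_single_of_ne_zero hj, mul_neg_one]

lemma trace_pauli {a b : ι → Fin 2} (h : a ≠ 0 ∨ b ≠ 0) (c : ℂ) : (pauli c a b).trace = 0 := by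
  by_cases ha : a = 0
  · subst ha
    simp [Matrix.trace, ← Finset.mul_sum, sum_zSign_eq_zero (h.resolve_left (not_not.mpr rfl))]
  · simp [Matrix.trace, ha]

lemma IsPauli.trace_eq_zero {M : Op ι} (hM : IsPauli M) (hH : M.IsHermitian) (h1 : M ≠ 1)
    (hn1 : M ≠ -1) : M.trace = 0 := by
  have hsq := hM.mul_self_eq_one hH
  obtain ⟨c, a, b, hc, rfl⟩ := isPauli_iff.mp hM
  by_cases hab : a = 0 ∧ b = 0
  · obtain ⟨rfl, rfl⟩ := hab
    rw [pauli_zero_zero] at h1 hn1 hsq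
    have hc2 : c * c = 1 := by
      simpa using congrFun (congrFun hsq 0) 0
    rcases mul_self_eq_one_iff.mp hc2 with rfl | rfl
    · exact absurd (one_smul ℂ 1) h1
    · exact absurd (neg_one_smul ℂ 1) hn1
  · exact trace_pauli (not_and_or.mp hab) c

@[simp] lemma ptrace_apply (A : Finset ι) (M : Op ι) (f g : ↥A → Fin 2) :
    ptrace A M f g = ∑ h : ↥(Aᶜ) → Fin 2, M (combine A f h) (combine A g h) := rfl

lemma ptrace_smul (A : Finset ι) (c : ℂ) (M : Op ι) : ptrace A (c • M) = c • ptrace A M := by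
  ext f g
  simp [Finset.mul_sum]

lemma ptrace_sum {κ : Type*} (A : Finset ι) (t : Finset κ) (M : κ → Op ι) :
    ptrace A (∑ k ∈ t, M k) = ∑ k ∈ t, ptrace A (M k) := by
  ext f g
  simp only [ptrace_apply, Matrix.sum_apply]
  exact Finset.sum_comm

lemma combine_add_combine (A : Finset ι) (f f' : ↥A → Fin 2) (h h' : ↥(Aᶜ) → Fin 2) :
    combine A f h + combine A f' h' = combine A (f + f') (h + h') := by
  ext i
  by_cases hi : i ∈ A <;> simp [combine, hi]

lemma combine_eq_add (A : Finset ι) (f : ↥A → Fin 2) (h : ↥(Aᶜ) → Fin 2) :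
    combine A f h = combine A f 0 + combine A 0 h := by
  rw [combine_add_combine, add_zero, zero_add]

lemma combine_zero_single (A : Finset ι) {j : ι} (hj : j ∉ A) :
    combine A 0 (Pi.single ⟨j, Finset.mem_compl.mpr hj⟩ 1) = Pi.single j 1 := by
  ext i
  by_cases hi : i ∈ A
  · simp [combine, hi, show i ≠ j by rintro rfl; exact hj hi]
  · simp [combine, hi, Pi.single_apply, Subtype.ext_iff]

lemma restrictOp_apply (A : Finset ι) (M : Op ι) (f g : ↥A → Fin 2) :
    restrictOp A M f g = M (combine A f 0) (combine A g 0) := rfl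

lemma ptrace_pauli_of_supported (A : Finset ι) (c : ℂ) (a : ι → Fin 2) {b : ι → Fin 2}
    (hb : ∀ i ∉ A, b i = 0) :
    ptrace A (pauli c a b) = (2 ^ Aᶜ.card : ℂ) • restrictOp A (pauli c a b) := by
  ext f g
  have hsign : ∀ h : ↥(Aᶜ) → Fin 2, zSign b (combine A 0 h) = 1 := fun h =>
    zSign_eq_one_of_disjoint fun i => by
      by_cases hi : i ∈ A
      · exact Or.inr (by simp [combine, hi])
      · exact Or.inl (hb i hi)
  have hterm : ∀ h : ↥(Aᶜ) → Fin 2,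
      pauli c a b (combine A f h) (combine A g h) = restrictOp A (pauli c a b) f g := fun h => by
    rw [combine_eq_add A f h, combine_eq_add A g h, pauli_apply_add_add, hsign, one_mul,
      restrictOp_apply]
  rw [ptrace_apply, Finset.sum_congr rfl fun h _ => hterm h]
  simp [nsmul_eq_mul, Finset.card_compl]

lemma ptrace_pauli_eq_zero {A : Finset ι} {a b : ι → Fin 2} {i : ι} (hi : i ∉ A)
    (hab : a i ≠ 0 ∨ b i ≠ 0) (c : ℂ) : ptrace A (pauli c a b) = 0 := by
  ext f g
  rw [ptrace_apply, Matrix.zero_apply]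
  rcases hab with ha | hb
  · refine Finset.sum_eq_zero fun h _ => pauli_apply_eq_zero_of_apply_eq ?_ ha c b
    simp [combine, hi]
  · refine Fintype.sum_eq_zero_of_map_add_eq_neg _ (Pi.single ⟨i, Finset.mem_compl.mpr hi⟩ 1)
      fun h => ?_
    have hshift : ∀ f : ↥A → Fin 2,
        combine A f (h + Pi.single _ 1) = combine A f h + Pi.single i 1 := fun f => by
      rw [← combine_zero_single A hi, combine_add_combine, add_zero]
    rw [hshift, hshift, pauli_apply_add_add, zSign_single_of_ne_zero hb, neg_one_mul]

lemma IsPauliSupportedOn.ptrace_eq {A : Finset ι} {M : Op ι} (hM : IsPauliSupportedOn A M) :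
    ptrace A M = (2 ^ Aᶜ.card : ℂ) • restrictOp A M := by
  obtain ⟨c, a, b, -, hab, rfl⟩ := isPauliSupportedOn_iff.mp hM
  exact ptrace_pauli_of_supported A c a fun i hi => (hab i hi).2

lemma IsPauli.ptrace_eq_zero {A : Finset ι} {M : Op ι} (hM : IsPauli M)
    (hA : ¬IsPauliSupportedOn A M) : ptrace A M = 0 := by
  obtain ⟨c, a, b, hc, rfl⟩ := isPauli_iff.mp hM
  have : ∃ i ∉ A, a i ≠ 0 ∨ b i ≠ 0 := by
    by_contra! h
    exact hA (isPauliSupportedOn_iff.mpr ⟨c, a, b, hc, h, rfl⟩)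
  obtain ⟨i, hi, hab⟩ := this
  exact ptrace_pauli_eq_zero hi hab c

section Projector

variable {ψ : (ι → Fin 2) → ℂ}

lemma outer_eq_vecMulVec (ψ : (ι → Fin 2) → ℂ) : outer ψ = Matrix.vecMulVec ψ (star ψ) := rfl

lemma IsUnitVec.star_dotProduct_self (hψ : IsUnitVec ψ) : star ψ ⬝ᵥ ψ = 1 := by
  simp only [dotProduct, Pi.star_apply]
  rw [← Complex.ofReal_one, ← hψ, Complex.ofReal_sum]
  exact Finset.sum_congr rfl fun f _ => (Complex.normSq_eq_conj_mul_self).symm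

lemma outer_isHermitian (ψ : (ι → Fin 2) → ℂ) : (outer ψ).IsHermitian := by
  rw [Matrix.IsHermitian, outer_eq_vecMulVec, Matrix.conjTranspose_vecMulVec, star_star]

lemma IsUnitVec.outer_mul_self (hψ : IsUnitVec ψ) : outer ψ * outer ψ = outer ψ := by
  rw [outer_eq_vecMulVec, Matrix.vecMulVec_mul_vecMulVec, hψ.star_dotProduct_self, one_smul]

lemma IsUnitVec.trace_outer (hψ : IsUnitVec ψ) : (outer ψ).trace = 1 := by
  rw [outer_eq_vecMulVec, Matrix.trace_vecMulVec, dotProduct_comm, hψ.star_dotProduct_self]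

lemma eq_outer_of_mulVec_eq {P : Op ι} (hP : P.IsHermitian) (hPP : P * P = P)
    (htr : P.trace = 1) (hψ : IsUnitVec ψ) (hPψ : P *ᵥ ψ = ψ) : P = outer ψ :=
  hP.eq_of_mul_eq_of_trace_eq (outer_isHermitian ψ) hPP hψ.outer_mul_self
    (by rw [outer_eq_vecMulVec, Matrix.mul_vecMulVec, hPψ]) (by rw [htr, hψ.trace_outer])

end Projector

section Stabilizer

variable {N : ℕ} {s : Fin N → Op ι}

@[simp] lemma subProd_empty : subProd s ∅ = 1 := by
  simp [subProd]

lemma subProd_insert (hcomm : ∀ i j, Commute (s i) (s j)) {T : Finset (Fin N)} {i : Fin N}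
    (hi : i ∉ T) : subProd s (insert i T) = s i * subProd s T := by
  have hpair : ∀ l : List (Fin N), (l.map s).Pairwise Commute := fun _ =>
    List.pairwise_map.mpr (List.pairwise_of_forall hcomm)
  have htoList : ∀ U : Finset (Fin N), subProd s U = (U.toList.map s).prod := fun U =>
    ((Finset.sort_perm_toList U _).map s).prod_eq' (hpair _)
  rw [htoList, htoList, ((Finset.toList_insert hi).map s).prod_eq' (hpair _), List.map_cons,
    List.prod_cons]

lemma commute_subProd (hcomm : ∀ i j, Commute (s i) (s j)) (i : Fin N) (T : Finset (Fin N)) :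
    Commute (s i) (subProd s T) := by
  induction T using Finset.induction_on with
  | empty => simp
  | insert j T hj ih => rw [subProd_insert hcomm hj]; exact (hcomm i j).mul_right ih

variable (hcomm : ∀ i j, Commute (s i) (s j)) (hsq : ∀ i, s i * s i = 1)
include hcomm hsq

lemma mul_subProd (i : Fin N) (T : Finset (Fin N)) :
    s i * subProd s T = subProd s (symmDiff {i} T) := by
  by_cases hi : i ∈ T
  · rw [Finset.singleton_symmDiff_of_mem hi, ← Finset.insert_erase hi,
      subProd_insert hcomm (Finset.notMem_erase i T), ← mul_assoc, hsq, one_mul,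
      Finset.erase_insert (Finset.notMem_erase i T)]
  · rw [Finset.singleton_symmDiff_of_notMem hi, subProd_insert hcomm hi]

lemma subProd_mul_subProd (T T' : Finset (Fin N)) :
    subProd s T * subProd s T' = subProd s (symmDiff T T') := by
  induction T using Finset.induction_on with
  | empty => rw [subProd_empty, one_mul, ← Finset.bot_eq_empty, bot_symmDiff]
  | insert i T hi ih =>
    rw [subProd_insert hcomm hi, mul_assoc, ih, mul_subProd hcomm hsq, ← symmDiff_assoc,
      Finset.singleton_symmDiff_of_notMem hi]

lemma coe_closure_range_eq_range_subProd :
    (Submonoid.closure (Set.range s) : Set (Op ι)) = Set.range (subProd s) := by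
  refine subset_antisymm (fun g hg => ?_) ?_
  · induction hg using Submonoid.closure_induction with
    | mem x hx =>
      obtain ⟨i, rfl⟩ := hx
      exact ⟨{i}, by simpa using subProd_insert hcomm (Finset.notMem_empty i)⟩
    | one => exact ⟨∅, subProd_empty⟩
    | mul x y _ _ hx hy =>
      obtain ⟨T, rfl⟩ := hx
      obtain ⟨T', rfl⟩ := hy
      exact ⟨symmDiff T T', (subProd_mul_subProd hcomm hsq T T').symm⟩
  · rintro _ ⟨T, rfl⟩
    induction T using Finset.induction_on with
    | empty => simp
    | insert i T hi ih =>
      rw [subProd_insert hcomm hi]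
      exact mul_mem (Submonoid.subset_closure (Set.mem_range_self i)) ih

lemma sep_mem_closure_range_eq_image (p : Op ι → Prop) :
    {g ∈ (Submonoid.closure (Set.range s) : Set (Op ι)) | p g}
      = ↑((Finset.univ.filter fun T => p (subProd s T)).image (subProd s)) := by
  rw [coe_closure_range_eq_range_subProd hcomm hsq]
  ext g
  simp only [Finset.coe_image, Finset.coe_filter, Finset.mem_univ, true_and]
  constructor
  · rintro ⟨⟨T, rfl⟩, hT⟩
    exact ⟨T, hT, rfl⟩
  · rintro ⟨T, hT, rfl⟩
    exact ⟨⟨T, rfl⟩, hT⟩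

lemma sum_subProd_mul_subProd (T' : Finset (Fin N)) :
    (∑ T, subProd s T) * subProd s T' = ∑ T, subProd s T := by
  simp_rw [Finset.sum_mul, subProd_mul_subProd hcomm hsq]
  exact Equiv.sum_comp (symmDiff_left_involutive T').toPerm (subProd s)

end Stabilizer

namespace IndepStabs

variable {N : ℕ} {s : Fin N → Op ι} (hs : IndepStabs s)
include hs

lemma mul_self_eq_one (i : Fin N) : s i * s i = 1 :=
  (hs.1 i).mul_self_eq_one (hs.2.1 i)

lemma isPauli_subProd (T : Finset (Fin N)) : IsPauli (subProd s T) := by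
  induction T using Finset.induction_on with
  | empty => simpa using isPauli_one
  | insert i T hi ih => rw [subProd_insert hs.2.2.1 hi]; exact (hs.1 i).mul ih

lemma isHermitian_subProd (T : Finset (Fin N)) : (subProd s T).IsHermitian := by
  induction T using Finset.induction_on with
  | empty => simp
  | insert i T hi ih =>
    rw [subProd_insert hs.2.2.1 hi, Matrix.IsHermitian, Matrix.conjTranspose_mul, ih.eq,
      (hs.2.1 i).eq, (commute_subProd hs.2.2.1 i T).eq]

lemma trace_subProd {T : Finset (Fin N)} (hT : T.Nonempty) : (subProd s T).trace = 0 :=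
  (hs.isPauli_subProd T).trace_eq_zero (hs.isHermitian_subProd T) (hs.2.2.2.2 T hT).1
    (hs.2.2.2.2 T hT).2

lemma subProd_mulVec {ψ : (ι → Fin 2) → ℂ} (hstab : ∀ i, s i *ᵥ ψ = ψ) (T : Finset (Fin N)) :
    subProd s T *ᵥ ψ = ψ := by
  induction T using Finset.induction_on with
  | empty => simp
  | insert i T hi ih => rw [subProd_insert hs.2.2.1 hi, ← Matrix.mulVec_mulVec, ih, hstab]

theorem outer_eq_smul_sum_subProd (hN : Fintype.card ι = N) {ψ : (ι → Fin 2) → ℂ}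
    (hψ : IsUnitVec ψ) (hstab : ∀ i, s i *ᵥ ψ = ψ) :
    outer ψ = ((2 : ℂ) ^ N)⁻¹ • ∑ T, subProd s T := by
  have hcard : (Finset.univ : Finset (Finset (Fin N))).card = 2 ^ N := by simp
  have h2N : ((2 : ℂ) ^ N)⁻¹ * 2 ^ N = 1 := inv_mul_cancel₀ (by positivity)
  set S := ∑ T, subProd s T
  have hSS : S * S = (2 ^ N : ℂ) • S := by
    rw [Finset.mul_sum, Finset.sum_congr rfl fun T _ =>
      sum_subProd_mul_subProd hs.2.2.1 hs.mul_self_eq_one T, Finset.sum_const, hcard]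
    norm_cast
  have hSψ : S *ᵥ ψ = (2 ^ N : ℂ) • ψ := by
    rw [Matrix.sum_mulVec, Finset.sum_congr rfl fun T _ => hs.subProd_mulVec hstab T,
      Finset.sum_const, hcard]
    norm_cast
  have htrS : S.trace = 2 ^ N := by
    rw [Matrix.trace_sum, Finset.sum_eq_single ∅ (fun T _ hT => hs.trace_subProd
      (Finset.nonempty_iff_ne_empty.mpr hT)) (by simp), subProd_empty, Matrix.trace_one]
    simp [hN]
  have hSH : S.IsHermitian := isSelfAdjoint_sum _ fun T _ => hs.isHermitian_subProd T
  refine (eq_outer_of_mulVec_eq (hSH.smul (by simp [IsSelfAdjoint])) ?_ ?_ hψ ?_).symm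
  · rw [smul_mul_smul, hSS, smul_smul, mul_assoc, h2N, mul_one]
  · rw [Matrix.trace_smul, htrS, smul_eq_mul, h2N]
  · rw [Matrix.smul_mulVec, hSψ, smul_smul, h2N, one_smul]

end IndepStabs

/-- For a stabilizer state `ψ` of an independent set of Hermitian pairwise
commuting Pauli strings with group `G`, and any subset `A` of the qubits, the reduced density
matrix of `|ψ⟩⟨ψ|` on `A` is `ρ_A = 2^{−|A|} Σ_{g ∈ G_A} g|_A`, where `G_A` is the
(finite) set of elements of `G` acting as the identity outside `A`. -/
theorem reduced_density_matrix_of_stabilizer_state {N : ℕ} (s : Fin N → Op (Fin N))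
    (hindep : IndepStabs s)
    (ψ : (Fin N → Fin 2) → ℂ) (hψ : IsUnitVec ψ) (hstab : ∀ i, s i *ᵥ ψ = ψ) :
    ∀ A : Finset (Fin N),
      ∃ hfin : {g ∈ (↑(Submonoid.closure (Set.range s)) : Set (Op (Fin N))) |
          IsPauliSupportedOn A g}.Finite,
        ptrace A (outer ψ)
          = ((2 : ℂ) ^ A.card)⁻¹ • ∑ g ∈ hfin.toFinset, restrictOp A g := by
  intro A
  have hterm : ∀ T, ptrace A (subProd s T) = if IsPauliSupportedOn A (subProd s T)
      then (2 ^ Aᶜ.card : ℂ) • restrictOp A (subProd s T) else 0 := fun T => by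
    split_ifs with hT
    · exact hT.ptrace_eq
    · exact (hindep.isPauli_subProd T).ptrace_eq_zero hT
  have hcard : (2 : ℂ) ^ N = 2 ^ A.card * 2 ^ Aᶜ.card := by
    rw [← pow_add, Finset.card_add_card_compl, Fintype.card_fin]
  rw [sep_mem_closure_range_eq_image hindep.2.2.1 hindep.mul_self_eq_one]
  refine ⟨Finset.finite_toSet _, ?_⟩
  rw [Finset.finite_toSet_toFinset, Finset.sum_image fun T _ T' _ h => hindep.2.2.2.1 h,
    hindep.outer_eq_smul_sum_subProd (Fintype.card_fin N) hψ hstab, ptrace_smul, ptrace_sum,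
    Finset.sum_congr rfl fun T _ => hterm T, ← Finset.sum_filter, ← Finset.smul_sum, smul_smul,
    hcard, mul_inv, mul_assoc, inv_mul_cancel₀ (by positivity), mul_one]

end QStab
end
end

section
/- Let N be even and consider the periodic chain of N qubits with sites indexed by ℤ/N. There exists a unitary matrix U on the N-qubit space such that U (X i) U† = X i and U (Z i) U† = X(i−1) * Z i * X(i+1) for every i ∈ ℤ/N. Moreover, any unitary U satisfying these two families of relations also satisfies U (X(i−1) Z i X(i+1)) U† = Z i for every i ∈ ℤ/N; that is, conjugation by U exchanges the single-qubit operators Z i with the cluster stabilizers g i = X(i−1) Z i X(i+1). -/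
open scoped Classical
open scoped Matrix
noncomputable section
/-!
Take for `U` the product of the controlled-`Z` gates on all bonds `(j, j + 1)`, written in the
`X` basis: `Wⱼ = (1 + Xⱼ + Xⱼ₊₁ - Xⱼ Xⱼ₊₁) / 2`. Being built from the commuting involutions `X`,
the `Wⱼ` are commuting Hermitian involutions commuting with every `Xᵢ`, so `U` is a Hermitian
involution fixing every `Xᵢ`. Only `Wᵢ₋₁` and `Wᵢ` fail to commute with `Zᵢ`, and
`Wᵢ Zᵢ Wᵢ = Xᵢ₊₁ Zᵢ`, `Wᵢ₋₁ Zᵢ Wᵢ₋₁ = Xᵢ₋₁ Zᵢ`, whence `U Zᵢ U = Xᵢ₋₁ Zᵢ Xᵢ₊₁`.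
For the second claim, conjugation by a unitary is multiplicative and `Xᵢ² = 1`, so
`U (Xᵢ₋₁ Zᵢ Xᵢ₊₁) U† = Xᵢ₋₁ (Xᵢ₋₁ Zᵢ Xᵢ₊₁) Xᵢ₊₁ = Zᵢ`.
-/

lemma Matrix.permMatrix_mul_diagonal {n R : Type*} [DecidableEq n] [Fintype n]
    [NonAssocSemiring R] (σ : Equiv.Perm n) (d : n → R) :
    σ.permMatrix R * Matrix.diagonal d = Matrix.diagonal (d ∘ σ) * σ.permMatrix R := by
  ext f g
  simp only [Matrix.mul_diagonal, Matrix.diagonal_mul, PEquiv.toMatrix_apply,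
    Equiv.toPEquiv_apply, Option.mem_def, Option.some.injEq, Function.comp_apply]
  split_ifs with h <;> simp [h]

namespace QStab

section Pauli

variable {ι : Type*}

lemma neg_eq_self_fin_two (g : ι → Fin 2) : -g = g :=
  funext fun j => (by decide : ∀ x : Fin 2, -x = x) (g j)

lemma add_self_eq_zero_fin_two (g : ι → Fin 2) : g + g = 0 := by
  rw [add_eq_zero_iff_eq_neg, neg_eq_self_fin_two]

lemma neg_one_pow_fin_two_add_one (x : Fin 2) :
    (-1 : ℂ) ^ ((x + 1 : Fin 2) : ℕ) = -(-1) ^ (x : ℕ) := by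
  fin_cases x <;> simp [Fin.add_def]

variable [DecidableEq ι]

lemma update_add_one_eq_add_single (g : ι → Fin 2) (i : ι) :
    Function.update g i (g i + 1) = g + Pi.single i 1 := by
  ext j
  rcases eq_or_ne j i with rfl | h <;> simp [*]

variable [Fintype ι]

lemma PX_eq_permMatrix (i : ι) :
    PX i = (Equiv.addRight (Pi.single i 1 : ι → Fin 2)).permMatrix ℂ := by
  ext f g
  have : f = g + Pi.single i 1 ↔ f + Pi.single i 1 = g := by
    rw [← eq_sub_iff_add_eq, sub_eq_add_neg, neg_eq_self_fin_two]
  simp only [PX, update_add_one_eq_add_single, Matrix.of_apply, PEquiv.toMatrix_apply,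
    Equiv.toPEquiv_apply, Option.mem_def, Option.some.injEq, Equiv.coe_addRight, this]

lemma PX_mul_PX (i j : ι) :
    PX i * PX j = (Equiv.addRight (Pi.single i 1 + Pi.single j 1 : ι → Fin 2)).permMatrix ℂ := by
  rw [PX_eq_permMatrix, PX_eq_permMatrix, ← Matrix.permMatrix_mul, Equiv.addRight_add]

lemma PX_mul_self (i : ι) : PX i * PX i = 1 := by
  rw [PX_mul_PX, add_self_eq_zero_fin_two, Equiv.addRight_zero, Matrix.permMatrix_one]

lemma commute_PX_PX (i j : ι) : Commute (PX i) (PX j) := by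
  rw [Commute, SemiconjBy, PX_mul_PX, PX_mul_PX, add_comm]

lemma isSelfAdjoint_PX (i : ι) : IsSelfAdjoint (PX i) := by
  rw [IsSelfAdjoint, Matrix.star_eq_conjTranspose, PX_eq_permMatrix,
    Matrix.conjTranspose_permMatrix, Equiv.neg_addRight, neg_eq_self_fin_two]

lemma PZ_eq_diagonal (i : ι) : PZ i = Matrix.diagonal fun f => (-1 : ℂ) ^ (f i : ℕ) := by
  ext f g
  simp [PZ, Matrix.diagonal_apply]

lemma PX_mul_PZ (i j : ι) :
    PX j * PZ i =
      Matrix.diagonal (fun f => (-1 : ℂ) ^ ((f + Pi.single j 1 : ι → Fin 2) i : ℕ)) * PX j := by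
  rw [PZ_eq_diagonal, PX_eq_permMatrix, Matrix.permMatrix_mul_diagonal]
  rfl

lemma commute_PZ_PX {i j : ι} (h : i ≠ j) : Commute (PZ i) (PX j) := by
  rw [Commute, SemiconjBy, PX_mul_PZ, PZ_eq_diagonal]
  simp [Pi.single_eq_of_ne h]

lemma PZ_mul_PX_self (i : ι) : PZ i * PX i = -(PX i * PZ i) := by
  rw [PX_mul_PZ, PZ_eq_diagonal]
  simp [neg_one_pow_fin_two_add_one, ← Matrix.diagonal_neg]

end Pauli

section Gate

variable {A : Type*} [Ring A] [Algebra ℂ A]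

/-- For the `Z`s of two qubits this is the controlled-`Z` gate; below it is used with `X`s. -/
def cz (a b : A) : A := (2 : ℂ)⁻¹ • (1 + a + b - a * b)

lemma cz_comm {a b : A} (hab : Commute a b) : cz a b = cz b a := by
  rw [cz, cz, hab.eq, add_right_comm (1 : A)]

lemma _root_.Commute.cz_right {x a b : A} (ha : Commute x a) (hb : Commute x b) :
    Commute x (cz a b) :=
  ((((Commute.one_right x).add_right ha).add_right hb).sub_right (ha.mul_right hb)).smul_right _

lemma _root_.Commute.cz_left {x a b : A} (ha : Commute a x) (hb : Commute b x) :
    Commute (cz a b) x :=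
  (ha.symm.cz_right hb.symm).symm

variable {a b : A}

lemma isSelfAdjoint_cz [StarRing A] [StarModule ℂ A] (ha : IsSelfAdjoint a)
    (hb : IsSelfAdjoint b) (hab : Commute a b) : IsSelfAdjoint (cz a b) := by
  simp [IsSelfAdjoint, cz, star_smul, ha.star_eq, hb.star_eq, hab.eq]

lemma cz_mul_cz_smul (ha : a * a = 1) (hb : b * b = 1) (hab : Commute a b) (s : ℂ) :
    cz a b * cz (s • a) b = ((1 + s) / 2) • 1 + ((1 - s) / 2) • b := by
  have haa : ∀ x, a * (a * x) = x := fun x => by rw [← mul_assoc, ha, one_mul]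
  have hba : ∀ x, b * (a * x) = a * (b * x) := fun x => by
    rw [← mul_assoc, ← hab.eq, mul_assoc]
  rw [cz, cz, smul_mul_smul_comm]
  simp only [mul_add, mul_sub, add_mul, sub_mul, one_mul, mul_one, mul_smul_comm,
    smul_mul_assoc, mul_assoc, ha, hb, haa, hba, ← hab.eq]
  module

lemma cz_mul_self (ha : a * a = 1) (hb : b * b = 1) (hab : Commute a b) :
    cz a b * cz a b = 1 := by
  simpa using cz_mul_cz_smul ha hb hab 1

lemma cz_mul_cz_neg (ha : a * a = 1) (hb : b * b = 1) (hab : Commute a b) :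
    cz a b * cz (-a) b = b := by
  simpa using cz_mul_cz_smul ha hb hab (-1)

lemma mul_cz_of_anticommute {z : A} (hza : z * a = -(a * z)) (hzb : Commute z b) :
    z * cz a b = cz (-a) b * z := by
  have hzab : z * (a * b) = -(a * b * z) := by
    rw [← mul_assoc, hza, neg_mul, mul_assoc, hzb.eq, mul_assoc]
  simp only [cz, mul_smul_comm, smul_mul_assoc, mul_add, mul_sub, add_mul, sub_mul, one_mul,
    mul_one, neg_mul, hza, hzb.eq, hzab]

lemma cz_conj_of_anticommute_left (ha : a * a = 1) (hb : b * b = 1) (hab : Commute a b) {z : A}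
    (hza : z * a = -(a * z)) (hzb : Commute z b) : cz a b * z * cz a b = b * z := by
  rw [mul_assoc, mul_cz_of_anticommute hza hzb, ← mul_assoc, cz_mul_cz_neg ha hb hab]

lemma cz_conj_of_anticommute_right (ha : a * a = 1) (hb : b * b = 1) (hab : Commute a b) {z : A}
    (hza : Commute z a) (hzb : z * b = -(b * z)) : cz a b * z * cz a b = a * z := by
  rw [cz_comm hab]
  exact cz_conj_of_anticommute_left hb ha hab.symm hzb hza

end Gate

section Involution

variable {M : Type*} [Monoid M]

lemma conj_eq_self_of_commute {r z : M} (hrz : Commute r z) (hr : r * r = 1) : r * z * r = z := by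
  rw [hrz.eq, mul_assoc, hr, mul_one]

lemma conj_mul_of_commute {w r : M} (hwr : Commute w r) (z : M) :
    w * r * z * (w * r) = w * (r * z * r) * w := by
  nth_rw 2 [hwr.eq]
  simp only [mul_assoc]

lemma conj_mul_conj {v w : M} (h : w * v = 1) (a b : M) :
    v * a * w * (v * b * w) = v * (a * b) * w := by
  simp only [mul_assoc, ← mul_assoc w v, h, one_mul]

lemma _root_.Finset.noncommProd_mul_self {κ : Type*} {s : Finset κ} {f : κ → M} (comm)
    (h : ∀ x ∈ s, f x * f x = 1) : s.noncommProd f comm * s.noncommProd f comm = 1 := by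
  rw [← Finset.noncommProd_mul_distrib f f comm comm comm,
    Finset.noncommProd_eq_pow_card s (f * f) _ 1 h, one_pow]

lemma _root_.Finset.isSelfAdjoint_noncommProd [StarMul M] {κ : Type*} {s : Finset κ}
    {f : κ → M} (comm) (h : ∀ x ∈ s, IsSelfAdjoint (f x)) :
    IsSelfAdjoint (s.noncommProd f comm) := by
  induction s using Finset.cons_induction with
  | empty => simp
  | cons a s ha ih =>
    rw [Finset.noncommProd_cons]
    have hs : ∀ x ∈ s, x ∈ Finset.cons a s ha := fun x hx => Finset.mem_cons_of_mem hx
    refine ((h a (Finset.mem_cons_self a s)).commute_iff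
      (ih _ fun x hx => h x (hs x hx))).1 ?_
    exact Finset.noncommProd_commute _ _ _ _ fun x hx =>
      comm (Finset.mem_cons_self a s) (hs x hx) (ne_of_mem_of_not_mem hx ha).symm

end Involution

section Chain

variable {N : ℕ} [NeZero N]

def bondGate (j : ZMod N) : Op (ZMod N) := cz (PX j) (PX (j + 1))

lemma commute_PX_bondGate (i j : ZMod N) : Commute (PX i) (bondGate j) :=
  (commute_PX_PX i j).cz_right (commute_PX_PX i (j + 1))

lemma commute_bondGate (j k : ZMod N) : Commute (bondGate j) (bondGate k) :=
  Commute.cz_left (commute_PX_bondGate j k) (commute_PX_bondGate (j + 1) k)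

lemma bondGate_mul_self (j : ZMod N) : bondGate j * bondGate j = 1 :=
  cz_mul_self (PX_mul_self j) (PX_mul_self (j + 1)) (commute_PX_PX j (j + 1))

lemma isSelfAdjoint_bondGate (j : ZMod N) : IsSelfAdjoint (bondGate j) :=
  isSelfAdjoint_cz (isSelfAdjoint_PX j) (isSelfAdjoint_PX (j + 1)) (commute_PX_PX j (j + 1))

lemma commute_PZ_bondGate {i j : ZMod N} (hj : j ≠ i) (hj' : j + 1 ≠ i) :
    Commute (PZ i) (bondGate j) :=
  (commute_PZ_PX hj.symm).cz_right (commute_PZ_PX hj'.symm)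

variable (N) in
def dualityUnitary : Op (ZMod N) :=
  Finset.univ.noncommProd bondGate fun j _ k _ _ => commute_bondGate j k

lemma dualityUnitary_mul_self : dualityUnitary N * dualityUnitary N = 1 :=
  Finset.noncommProd_mul_self _ fun j _ => bondGate_mul_self j

lemma isSelfAdjoint_dualityUnitary : IsSelfAdjoint (dualityUnitary N) :=
  Finset.isSelfAdjoint_noncommProd _ fun j _ => isSelfAdjoint_bondGate j

lemma dualityUnitary_conj_PX (i : ZMod N) : dualityUnitary N * PX i * dualityUnitary N = PX i :=
  conj_eq_self_of_commute
    (Finset.noncommProd_commute _ _ _ _ fun j _ => commute_PX_bondGate i j).symm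
    dualityUnitary_mul_self

lemma bondGate_conj_PZ_self [Fact (1 < N)] (i : ZMod N) :
    bondGate i * PZ i * bondGate i = PX (i + 1) * PZ i :=
  cz_conj_of_anticommute_left (PX_mul_self i) (PX_mul_self (i + 1)) (commute_PX_PX i (i + 1))
    (PZ_mul_PX_self i) (commute_PZ_PX (by simp))

lemma bondGate_sub_one_conj_PZ [Fact (1 < N)] (i : ZMod N) :
    bondGate (i - 1) * PZ i * bondGate (i - 1) = PX (i - 1) * PZ i := by
  have hX : PX (i - 1 + 1) = PX i := by rw [sub_add_cancel]
  rw [bondGate, hX]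
  exact cz_conj_of_anticommute_right (PX_mul_self (i - 1)) (PX_mul_self i)
    (commute_PX_PX (i - 1) i) (commute_PZ_PX (by simp : i - 1 ≠ i).symm) (PZ_mul_PX_self i)

lemma dualityUnitary_conj_PZ [Fact (1 < N)] (i : ZMod N) :
    dualityUnitary N * PZ i * dualityUnitary N = PX (i - 1) * PZ i * PX (i + 1) := by
  have hi : i ∈ Finset.univ.erase (i - 1) :=
    Finset.mem_erase.2 ⟨(by simp : i - 1 ≠ i).symm, Finset.mem_univ i⟩
  set R := ((Finset.univ.erase (i - 1)).erase i).noncommProd bondGate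
    fun j _ k _ _ => commute_bondGate j k
  have hsplit : dualityUnitary N = bondGate (i - 1) * (bondGate i * R) :=
    (Finset.mul_noncommProd_erase _ (Finset.mem_univ (i - 1)) _ _).symm.trans
      (congrArg _ (Finset.mul_noncommProd_erase _ hi _ _).symm)
  have hRZ : Commute R (PZ i) := by
    refine (Finset.noncommProd_commute _ _ _ _ fun j hj => ?_).symm
    obtain ⟨hji, hji'⟩ := by simpa using hj
    exact commute_PZ_bondGate hji fun h => hji' (eq_sub_of_add_eq h)
  have hRR : R * R = 1 := Finset.noncommProd_mul_self _ fun j _ => bondGate_mul_self j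
  have hWR : ∀ j, Commute (bondGate j) R := fun j =>
    Finset.noncommProd_commute _ _ _ _ fun k _ => commute_bondGate j k
  calc dualityUnitary N * PZ i * dualityUnitary N
      = bondGate (i - 1) * (bondGate i * (R * PZ i * R) * bondGate i) * bondGate (i - 1) := by
        rw [hsplit, conj_mul_of_commute ((commute_bondGate (i - 1) i).mul_right (hWR (i - 1))),
          conj_mul_of_commute (hWR i)]
    _ = bondGate (i - 1) * (PX (i + 1) * PZ i) * bondGate (i - 1) := by
        rw [conj_eq_self_of_commute hRZ hRR, bondGate_conj_PZ_self]
    _ = PX (i + 1) * (PX (i - 1) * PZ i) := by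
        rw [← bondGate_sub_one_conj_PZ, ← mul_assoc, ← (commute_PX_bondGate _ _).eq]
        simp only [mul_assoc]
    _ = PX (i - 1) * PZ i * PX (i + 1) := by
        rw [← mul_assoc, (commute_PX_PX _ _).eq, mul_assoc, mul_assoc,
          (commute_PZ_PX (by simp)).eq]

lemma dualityUnitary_conjTranspose : (dualityUnitary N)ᴴ = dualityUnitary N := by
  rw [← Matrix.star_eq_conjTranspose, isSelfAdjoint_dualityUnitary.star_eq]

end Chain

/-- (Periodic chain of `N` qubits, `N` even, sites indexed by `ℤ/N`.)
There exists a unitary `U` with `U (X i) U† = X i` and `U (Z i) U† = X(i−1) Z i X(i+1)`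
for all `i`; moreover any unitary `U` satisfying these relations also satisfies
`U (X(i−1) Z i X(i+1)) U† = Z i` for all `i`: conjugation by `U` exchanges the
single-qubit `Z i` with the cluster stabilizers. -/
theorem duality_unitary_exists_and_swaps {N : ℕ} [NeZero N] (hN : Even N) :
    (∃ U : Op (ZMod N),
      U * Uᴴ = 1 ∧ Uᴴ * U = 1 ∧
      (∀ i : ZMod N, U * PX i * Uᴴ = PX i) ∧
      (∀ i : ZMod N, U * PZ i * Uᴴ = PX (i - 1) * PZ i * PX (i + 1))) ∧
    (∀ U : Op (ZMod N), U * Uᴴ = 1 → Uᴴ * U = 1 →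
      (∀ i : ZMod N, U * PX i * Uᴴ = PX i) →
      (∀ i : ZMod N, U * PZ i * Uᴴ = PX (i - 1) * PZ i * PX (i + 1)) →
      ∀ i : ZMod N, U * (PX (i - 1) * PZ i * PX (i + 1)) * Uᴴ = PZ i) := by
  have : Fact (1 < N) := ⟨by
    obtain ⟨k, rfl⟩ := hN
    have := NeZero.ne (k + k)
    omega⟩
  refine ⟨⟨dualityUnitary N, ?_⟩, fun U _ hU hX hZ i => ?_⟩
  · simp only [dualityUnitary_conjTranspose]
    exact ⟨dualityUnitary_mul_self, dualityUnitary_mul_self, dualityUnitary_conj_PX,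
      dualityUnitary_conj_PZ⟩
  · rw [← conj_mul_conj hU, ← conj_mul_conj hU, hX, hZ, hX]
    simp only [← mul_assoc, PX_mul_self, one_mul]
    rw [mul_assoc, PX_mul_self, mul_one]

end QStab
end
end
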